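/- Let R be a left hereditary associative unital ring and M a projective left R-module. Then for every submodule N of M, regarded as a left R-module in its own right, β(N) ⊆ ⟨E_N(0)⟩ ⊆ β_co(N). -/

import Mathlib

universe u v w

/-- The envelope of zero in a ring `R`:
`E_R(0) = {r·s : r, s ∈ R, r^k·s = 0 for some positive integer k}`. -/
def ringEnvelopeZero (R : Type u) [Ring R] : Set R :=
  {x | ∃ (r s : R) (k : ℕ), 0 < k ∧ r ^ k * s = 0 ∧ x = r * s}

/-- A two-sided ideal `P` of `R` is prime if it is proper and
`A·B ⊆ P` implies `A ⊆ P` or `B ⊆ P` for all two-sided ideals `A`, `B`. -/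
def IsPrimeTwoSidedIdeal {R : Type u} [Ring R] (P : TwoSidedIdeal R) : Prop :=
  P ≠ ⊤ ∧ ∀ A B : TwoSidedIdeal R, (∀ a ∈ A, ∀ b ∈ B, a * b ∈ P) → A ≤ P ∨ B ≤ P

/-- A two-sided ideal `P` of `R` is completely prime if it is proper and
`a·b ∈ P` implies `a ∈ P` or `b ∈ P`. -/
def IsCompletelyPrimeTwoSidedIdeal {R : Type u} [Ring R] (P : TwoSidedIdeal R) : Prop :=
  P ≠ ⊤ ∧ ∀ a b : R, a * b ∈ P → a ∈ P ∨ b ∈ P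

/-- `β(R)`: the prime radical of `R`, the intersection of all prime two-sided ideals. -/
def ringPrimeRadical (R : Type u) [Ring R] : Set R :=
  {x | ∀ P : TwoSidedIdeal R, IsPrimeTwoSidedIdeal P → x ∈ P}

/-- `β_co(R)`: the completely prime radical of `R`. -/
def ringCompletelyPrimeRadical (R : Type u) [Ring R] : Set R :=
  {x | ∀ P : TwoSidedIdeal R, IsCompletelyPrimeTwoSidedIdeal P → x ∈ P}

/-- A ring is 2-primal if its set of nilpotent elements equals its prime radical. -/
def IsTwoPrimalRing (R : Type u) [Ring R] : Prop :=
  {x : R | IsNilpotent x} = ringPrimeRadical R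

section ModuleDefs

variable {R : Type u} [Ring R] {M : Type v} [AddCommGroup M] [Module R M]

/-- The envelope `E_M(N) = {r·m : r ∈ R, m ∈ M, r^k·m ∈ N for some positive integer k}`. -/
def envelope (N : Submodule R M) : Set M :=
  {x | ∃ (r : R) (m : M) (k : ℕ), 0 < k ∧ r ^ k • m ∈ N ∧ x = r • m}

/-- `P` is a prime submodule of `M`: `P ≠ M` and for every two-sided ideal `A` of `R` and
every submodule `N` of `M`, `A·N ⊆ P` implies `N ⊆ P` or `A·M ⊆ P`. -/
def IsPrimeSubmodule (P : Submodule R M) : Prop :=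
  P ≠ ⊤ ∧ ∀ (A : TwoSidedIdeal R) (N : Submodule R M),
    (∀ a ∈ A, ∀ n ∈ N, a • n ∈ P) → N ≤ P ∨ ∀ a ∈ A, ∀ m : M, a • m ∈ P

/-- `P` is a completely prime submodule of `M`: `P ≠ M` and `r·m ∈ P` implies
`m ∈ P` or `r·M ⊆ P`. -/
def IsCompletelyPrimeSubmodule (P : Submodule R M) : Prop :=
  P ≠ ⊤ ∧ ∀ (r : R) (m : M), r • m ∈ P → m ∈ P ∨ ∀ m' : M, r • m' ∈ P

/-- `P` is a completely semiprime submodule of `M`: `P ≠ M` and `a²·m ∈ P` implies `a·m ∈ P`. -/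
def IsCompletelySemiprimeSubmodule (P : Submodule R M) : Prop :=
  P ≠ ⊤ ∧ ∀ (a : R) (m : M), (a * a) • m ∈ P → a • m ∈ P

/-- `β^s(N)`: the intersection of all prime submodules of `M` containing `N`
(`= M` if there are none). -/
def primeRadicalOf (N : Submodule R M) : Submodule R M :=
  sInf {P : Submodule R M | IsPrimeSubmodule P ∧ N ≤ P}

/-- `β_co^s(N)`: the intersection of all completely prime submodules of `M` containing `N`
(`= M` if there are none). -/
def cPrimeRadicalOf (N : Submodule R M) : Submodule R M :=
  sInf {P : Submodule R M | IsCompletelyPrimeSubmodule P ∧ N ≤ P}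

/-- An element `m` of `M` is strongly nilpotent if `m = a_1·m_1 + … + a_r·m_r` such that for
every `i` and every sequence `a_{i,1}, a_{i,2}, …` with `a_{i,1} = a_i` and
`a_{i,n+1} ∈ a_{i,n}·R·a_{i,n}`, there exists `k` with `a_{i,k}·R·m_i = 0`. -/
def IsStronglyNilpotent (R : Type u) [Ring R] {M : Type v} [AddCommGroup M] [Module R M]
    (m : M) : Prop :=
  ∃ (r : ℕ) (a : Fin r → R) (mi : Fin r → M),
    m = ∑ i, a i • mi i ∧
    ∀ (i : Fin r) (s : ℕ → R), s 0 = a i → (∀ n, ∃ t : R, s (n + 1) = s n * t * s n) →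
      ∃ k, ∀ t : R, (s k * t) • mi i = 0

/-- `N_s(M)`: the set of strongly nilpotent elements of `M`. -/
def stronglyNilpotentSet (R : Type u) [Ring R] (M : Type v) [AddCommGroup M] [Module R M] :
    Set M :=
  {m : M | IsStronglyNilpotent R m}

end ModuleDefs

/-!
Every linear functional `g : N → R` maps `β(N)` into every prime ideal of `R`, because the
preimage of a prime ideal under `g` is a prime submodule (or all of `N`); and an element of `R`
lying in every prime ideal is nilpotent, by the usual Zorn argument with an ideal maximal among
those avoiding its powers. As `N` is projective, a dual basis writes each `x ∈ β(N)` as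
`∑ gᵢ(x) • xᵢ` with nilpotent coefficients `gᵢ(x)`, and `r • m` with `r` nilpotent lies in
`E_N(0)`. For the second inclusion, a completely prime submodule containing `r^k • m` contains
`r • m`, by peeling off one factor of `r` at a time.
-/

namespace TwoSidedIdeal

variable {R : Type u} [Ring R]

theorem exists_coe_eq_biUnion_of_isChain {c : Set (TwoSidedIdeal R)} (hc : IsChain (· ≤ ·) c)
    (hne : c.Nonempty) : ∃ J : TwoSidedIdeal R, (J : Set R) = ⋃ I ∈ c, (I : Set R) := by
  obtain ⟨I₀, hI₀⟩ := hne
  refine ⟨.mk' (⋃ I ∈ c, (I : Set R)) (Set.mem_biUnion hI₀ I₀.zero_mem) ?_ ?_ ?_ ?_,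
    coe_mk' _ _ _ _ _ _⟩ <;> simp only [Set.mem_iUnion, SetLike.mem_coe]
  · rintro x y ⟨I, hI, hx⟩ ⟨J, hJ, hy⟩
    obtain ⟨K, hK, hIK, hJK⟩ := hc.directedOn I hI J hJ
    exact ⟨K, hK, K.add_mem (hIK hx) (hJK hy)⟩
  · rintro x ⟨I, hI, hx⟩
    exact ⟨I, hI, I.neg_mem hx⟩
  · rintro x y ⟨I, hI, hy⟩
    exact ⟨I, hI, I.mul_mem_left x y hy⟩
  · rintro x y ⟨I, hI, hx⟩
    exact ⟨I, hI, I.mul_mem_right x y hx⟩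

def colon (P A : TwoSidedIdeal R) : TwoSidedIdeal R :=
  .mk' {b | ∀ a ∈ A, a * b ∈ P}
    (fun a _ => by rw [mul_zero]; exact P.zero_mem)
    (fun h₁ h₂ a ha => by rw [mul_add]; exact P.add_mem (h₁ a ha) (h₂ a ha))
    (fun h a ha => by rw [mul_neg]; exact P.neg_mem (h a ha))
    (fun {r _} h a ha => by rw [← mul_assoc]; exact h (a * r) (A.mul_mem_right _ _ ha))
    (fun h a ha => by rw [← mul_assoc]; exact P.mul_mem_right _ _ (h a ha))

theorem mem_colon {P A : TwoSidedIdeal R} {b : R} : b ∈ P.colon A ↔ ∀ a ∈ A, a * b ∈ P :=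
  mem_mk' _ _ _ _ _ _ b

theorem exists_isPrime_forall_pow_notMem {a : R} (ha : ¬IsNilpotent a) :
    ∃ P : TwoSidedIdeal R, IsPrimeTwoSidedIdeal P ∧ ∀ n, a ^ n ∉ P := by
  have hbot : ∀ n, a ^ n ∉ (⊥ : TwoSidedIdeal R) := fun n h => ha ⟨n, (mem_bot R).mp h⟩
  obtain ⟨P, -, hmax⟩ := zorn_le_nonempty₀ {I : TwoSidedIdeal R | ∀ n, a ^ n ∉ I}
    (fun c hcs hc I hI => by
      obtain ⟨J, hJ⟩ := exists_coe_eq_biUnion_of_isChain hc ⟨I, hI⟩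
      refine ⟨J, fun n hn => ?_, fun K hK => ?_⟩
      · rw [← SetLike.mem_coe, hJ, Set.mem_iUnion₂] at hn
        obtain ⟨K, hK, hn⟩ := hn
        exact hcs hK n hn
      · rw [le_iff, hJ]
        exact Set.subset_biUnion_of_mem hK) ⊥ hbot
  have hpow : ∀ A : TwoSidedIdeal R, ¬A ≤ P → ∃ n, ∃ p ∈ P, ∃ q ∈ A, p + q = a ^ n := by
    intro A hA
    by_contra! h
    refine hA (le_sup_right.trans (hmax.eq_of_ge (y := P ⊔ A) (fun n hn => ?_) le_sup_left).le)
    obtain ⟨p, hp, q, hq, hpq⟩ := mem_sup.mp hn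
    exact h n p hp q hq hpq
  refine ⟨P, ⟨fun htop => hmax.prop 0 (htop ▸ mem_top R), fun A B hAB => ?_⟩, hmax.prop⟩
  by_contra! hAB'
  obtain ⟨n, p, hp, α, hα, hn⟩ := hpow A hAB'.1
  obtain ⟨m, q, hq, β, hβ, hm⟩ := hpow B hAB'.2
  refine hmax.prop (n + m) ?_
  rw [pow_add, ← hn, ← hm, add_mul, mul_add, mul_add]
  exact P.add_mem (P.add_mem (P.mul_mem_right _ _ hp) (P.mul_mem_right _ _ hp))
    (P.add_mem (P.mul_mem_left _ _ hq) (hAB α hα β hβ))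

end TwoSidedIdeal

theorem ringPrimeRadical_subset_setOf_isNilpotent (R : Type u) [Ring R] :
    ringPrimeRadical R ⊆ {x | IsNilpotent x} := by
  intro a ha
  by_contra hnil
  obtain ⟨P, hP, hpow⟩ := TwoSidedIdeal.exists_isPrime_forall_pow_notMem hnil
  exact hpow 1 ((pow_one a).symm ▸ ha P hP)

section Module

variable {R : Type u} [Ring R] {X : Type v} [AddCommGroup X] [Module R X]

theorem isPrimeSubmodule_comap {P : TwoSidedIdeal R} (hP : IsPrimeTwoSidedIdeal P)
    (g : X →ₗ[R] R) (hne : Submodule.comap g P.asIdeal ≠ ⊤) :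
    IsPrimeSubmodule (Submodule.comap g P.asIdeal) := by
  refine ⟨hne, fun A K hAK => ?_⟩
  simp only [Submodule.mem_comap, TwoSidedIdeal.mem_asIdeal, map_smul, smul_eq_mul] at hAK ⊢
  rcases hP.2 A (P.colon A) fun a ha b hb => TwoSidedIdeal.mem_colon.mp hb a ha with hA | hcolon
  · exact .inr fun a ha m => P.mul_mem_right _ _ (hA ha)
  · exact .inl fun k hk => hcolon (TwoSidedIdeal.mem_colon.mpr fun a ha => hAK a ha k hk)

theorem primeRadicalOf_bot_le_comap {P : TwoSidedIdeal R} (hP : IsPrimeTwoSidedIdeal P)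
    (g : X →ₗ[R] R) : primeRadicalOf (⊥ : Submodule R X) ≤ Submodule.comap g P.asIdeal := by
  by_cases htop : Submodule.comap g P.asIdeal = ⊤
  · exact htop ▸ le_top
  · exact sInf_le ⟨isPrimeSubmodule_comap hP g htop, bot_le⟩

theorem isNilpotent_apply_of_mem_primeRadicalOf_bot (g : X →ₗ[R] R) {x : X}
    (hx : x ∈ primeRadicalOf (⊥ : Submodule R X)) : IsNilpotent (g x) :=
  ringPrimeRadical_subset_setOf_isNilpotent R fun _ hP => primeRadicalOf_bot_le_comap hP g hx

theorem smul_mem_envelope_bot_of_isNilpotent {r : R} (hr : IsNilpotent r) (m : X) :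
    r • m ∈ envelope (⊥ : Submodule R X) := by
  obtain ⟨k, hk⟩ := hr
  exact ⟨r, m, k + 1, k.succ_pos, by rw [pow_succ, hk, zero_mul, zero_smul]; exact zero_mem _, rfl⟩

theorem primeRadicalOf_bot_le_span_envelope_bot [Module.Projective R X] :
    primeRadicalOf (⊥ : Submodule R X) ≤ Submodule.span R (envelope (⊥ : Submodule R X)) := by
  obtain ⟨s, hs⟩ := Module.projective_def.mp ‹Module.Projective R X›
  intro x hx
  rw [← hs x, Finsupp.linearCombination_apply]
  refine Submodule.sum_mem _ fun i _ => Submodule.subset_span ?_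
  exact smul_mem_envelope_bot_of_isNilpotent
    (isNilpotent_apply_of_mem_primeRadicalOf_bot ((Finsupp.lapply i).comp s) hx) _

theorem IsCompletelyPrimeSubmodule.smul_mem_of_pow_smul_mem {P : Submodule R X}
    (hP : IsCompletelyPrimeSubmodule P) {r : R} {m : X} {k : ℕ} (hk : 0 < k)
    (hm : r ^ k • m ∈ P) : r • m ∈ P := by
  induction k, hk using Nat.le_induction generalizing m with
  | base => simpa using hm
  | succ k hk ih =>
    rw [pow_succ, mul_smul] at hm
    rcases hP.2 r _ (ih hm) with h | h
    · exact h
    · exact h m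

theorem envelope_subset_of_isCompletelyPrimeSubmodule {N P : Submodule R X}
    (hP : IsCompletelyPrimeSubmodule P) (hNP : N ≤ P) : envelope N ⊆ P := by
  rintro _ ⟨r, m, k, hk, hm, rfl⟩
  exact hP.smul_mem_of_pow_smul_mem hk (hNP hm)

theorem span_envelope_le_cPrimeRadicalOf (N : Submodule R X) :
    Submodule.span R (envelope N) ≤ cPrimeRadicalOf N :=
  le_sInf fun _ ⟨hP, hNP⟩ =>
    Submodule.span_le.mpr (envelope_subset_of_isCompletelyPrimeSubmodule hP hNP)

end Module

/-- if `R` is left hereditary and `M` is a projective left `R`-module, then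
for every submodule `N` of `M` (regarded as an `R`-module), `β(N) ⊆ ⟨E_N(0)⟩ ⊆ β_co(N)`. -/
theorem stmt14 {R : Type u} [Ring R]
    (hher : ∀ (X : Type v) [AddCommGroup X] [Module R X], Module.Projective R X →
      ∀ N : Submodule R X, Module.Projective R N)
    {M : Type v} [AddCommGroup M] [Module R M] (hM : Module.Projective R M)
    (N : Submodule R M) :
    primeRadicalOf (⊥ : Submodule R N) ≤
      Submodule.span R (envelope (⊥ : Submodule R N)) ∧
    Submodule.span R (envelope (⊥ : Submodule R N)) ≤
      cPrimeRadicalOf (⊥ : Submodule R N) := by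
  have := hher M hM N
  exact ⟨primeRadicalOf_bot_le_span_envelope_bot, span_envelope_le_cPrimeRadicalOf ⊥⟩
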